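/- Let q = 6t+1 be a prime power, g a primitive root of F_q, ω = g^{2t}, and W = F_q^n with n ≥ 2. Choose generators u_i of the (qⁿ−1)/(q−1) one-dimensional subspaces of W and nondegenerate alternating forms f_L on each 2-dimensional subspace L. For nonzero u and c ∈ F_q^*, let P_{u,c} be the partition of W ∖ span(u) into triples ±T(u,v) with f_L(u,v) ∈ g^{[0,t)}·c as defined in the paper. Then the union of the partial parallel classes P_{g^a u_i, ω^b} over 0 ≤ a < t, b ∈ {0,1,2}, and all i contains every unordered zero-sum non-collinear triple of W exactly once. -/

import Mathlib

/-- The triple `T(u,v) = {u+v, ωu+ω²v, ω²u+ωv}`. -/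
def Ttriple {F W : Type*} [Field F] [AddCommGroup W] [Module F W]
    (ω : F) (u v : W) : Set W :=
  {u + v, ω • u + ω ^ 2 • v, ω ^ 2 • u + ω • v}

/-- The partial parallel class `P_{u,c}`: all triples `±T(u,v)` over 2-dimensional
subspaces `L ∋ u` and `v ∈ L` with `f_L(u,v) ∈ {gᵐc : 0 ≤ m < t}`. -/
def Pclass {F : Type*} [Field F] {W : Type*} [AddCommGroup W] [Module F W]
    (t : ℕ) (g : F) (f : (L : Submodule F W) → L →ₗ[F] L →ₗ[F] F)
    (u : W) (c : F) : Set (Set W) :=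
  {S | ∃ (L : Submodule F W) (huL : u ∈ L), Module.finrank F L = 2 ∧
    ∃ v : L, (∃ m < t, f L ⟨u, huL⟩ v = g ^ m * c) ∧
      (S = Ttriple (g ^ (2 * t)) u (v : W) ∨
       S = -Ttriple (g ^ (2 * t)) u (v : W))}

/-
The ordered pairs `(u, v)` with `{x, y, -x-y} = ±T(u, v)` are exactly `(e u₀, e⁻¹ v₀)` and
`(e v₀, e⁻¹ u₀)` with `e⁶ = 1`, where `u₀ + v₀ = x` and `ω u₀ + ω² v₀ = y`: the elements of
`T(u, v)` are the `c u + c⁻¹ v` with `c³ = 1`, and `-T(u, v) = T(-u, -v)`. All these pairs lie in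
`L = span {x, y}`, on which `f_L` takes the value `λ = f_L(u₀, v₀) ≠ 0` on the first family and
`-λ` on the second. Since `g^[0,t)` is a transversal of the sixth roots of unity in `F*`, the
vectors `gᵃ uᵢ` meet each of the two families exactly once, and the sets `g^[0,t) ωᵇ` (`b < 3`)
are pairwise disjoint and their union contains exactly one of `λ` and `-λ`.
-/

section Ttriple

variable {F W : Type*} [Field F] [AddCommGroup W] [Module F W] {ω : F}

lemma IsPrimitiveRoot.sq_add_add_one (hω : IsPrimitiveRoot ω 3) : ω ^ 2 + ω + 1 = 0 := by
  have := hω.geom_sum_eq_zero (by norm_num)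
  simp only [Finset.sum_range_succ, Finset.sum_range_zero] at this
  linear_combination this

lemma IsPrimitiveRoot.sub_sq_ne_zero (hω : IsPrimitiveRoot ω 3) : ω - ω ^ 2 ≠ 0 := by
  have h0 : ω ≠ 0 := hω.ne_zero (by norm_num)
  have h1 : 1 - ω ≠ 0 := sub_ne_zero.2 (hω.ne_one (by norm_num)).symm
  simpa [mul_sub, sq] using mul_ne_zero h0 h1

lemma IsPrimitiveRoot.pow_three_eq_one_iff (hω : IsPrimitiveRoot ω 3) {c : F} :
    c ^ 3 = 1 ↔ c = 1 ∨ c = ω ∨ c = ω ^ 2 := by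
  constructor
  · intro hc
    obtain ⟨i, hi, rfl⟩ := hω.eq_pow_of_pow_eq_one hc
    interval_cases i <;> simp
  · rintro (rfl | rfl | rfl)
    · exact one_pow 3
    · exact hω.pow_eq_one
    · rw [← pow_mul, mul_comm, pow_mul, hω.pow_eq_one, one_pow]

lemma pow_six_eq_one_iff {c : F} : c ^ 6 = 1 ↔ c ^ 3 = 1 ∨ (-c) ^ 3 = 1 := by
  rw [show c ^ 6 = c ^ 3 * c ^ 3 by ring, mul_self_eq_one_iff, Odd.neg_pow (by decide),
    neg_eq_iff_eq_neg]

lemma mem_Ttriple_iff (hω : IsPrimitiveRoot ω 3) {u v w : W} :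
    w ∈ Ttriple ω u v ↔ ∃ c : F, c ^ 3 = 1 ∧ w = c • u + c⁻¹ • v := by
  have h1 : ω⁻¹ = ω ^ 2 := inv_eq_of_mul_eq_one_right (by rw [← pow_succ', hω.pow_eq_one])
  have h2 : (ω ^ 2)⁻¹ = ω := by rw [← h1, inv_inv]
  simp only [Ttriple, Set.mem_insert_iff, Set.mem_singleton_iff, hω.pow_three_eq_one_iff,
    or_and_right, exists_or, exists_eq_left, inv_one, one_smul, h1, h2]

lemma Ttriple_smul_inv_smul (hω : IsPrimitiveRoot ω 3) {c : F} (hc : c ^ 3 = 1) (u v : W) :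
    Ttriple ω (c • u) (c⁻¹ • v) = Ttriple ω u v := by
  have hc0 : c ≠ 0 := by rintro rfl; norm_num at hc
  ext w
  simp only [mem_Ttriple_iff hω, smul_smul, ← mul_inv]
  constructor
  · rintro ⟨d, hd, rfl⟩
    exact ⟨d * c, by rw [mul_pow, hd, hc, one_mul], rfl⟩
  · rintro ⟨d, hd, rfl⟩
    refine ⟨d * c⁻¹, by rw [mul_pow, hd, inv_pow, hc, inv_one, one_mul], ?_⟩
    rw [inv_mul_cancel_right₀ hc0]

lemma Ttriple_comm (u v : W) : Ttriple ω v u = Ttriple ω u v := by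
  rw [Ttriple, Ttriple, add_comm v, add_comm (ω • v), add_comm (ω ^ 2 • v), Set.pair_comm]

lemma neg_Ttriple (u v : W) : -Ttriple ω u v = Ttriple ω (-u) (-v) := by
  simp only [Ttriple, Set.neg_insert, Set.neg_singleton, neg_add, smul_neg]

lemma Ttriple_subset {L : Submodule F W} {u v : W} (hu : u ∈ L) (hv : v ∈ L) :
    Ttriple ω u v ⊆ L := by
  rintro w (rfl | rfl | rfl)
  · exact L.add_mem hu hv
  all_goals exact L.add_mem (L.smul_mem _ hu) (L.smul_mem _ hv)

/-- `(Tfst ω x y, Tsnd ω x y)` is the solution `(u, v)` of `u + v = x`, `ω u + ω² v = y`. -/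
def Tfst (ω : F) (x y : W) : W := (ω - ω ^ 2)⁻¹ • (y - ω ^ 2 • x)

def Tsnd (ω : F) (x y : W) : W := (ω - ω ^ 2)⁻¹ • (ω • x - y)

lemma eq_Tfst_Tsnd (hω : IsPrimitiveRoot ω 3) {u v x y : W} (hx : u + v = x)
    (hy : ω • u + ω ^ 2 • v = y) : u = Tfst ω x y ∧ v = Tsnd ω x y := by
  subst hx hy
  have hδ := hω.sub_sq_ne_zero
  constructor
  · rw [Tfst, eq_inv_smul_iff₀ hδ]; module
  · rw [Tsnd, eq_inv_smul_iff₀ hδ]; module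

lemma Ttriple_Tfst_Tsnd (hω : IsPrimitiveRoot ω 3) (x y : W) :
    Ttriple ω (Tfst ω x y) (Tsnd ω x y) = {x, y, -x - y} := by
  have hδ := hω.sub_sq_ne_zero
  have solve : ∀ (a b : F) (z : W), a • (y - ω ^ 2 • x) + b • (ω • x - y) = (ω - ω ^ 2) • z →
      a • Tfst ω x y + b • Tsnd ω x y = z := by
    intro a b z h
    apply smul_right_injective W hδ
    simpa only [Tfst, Tsnd, smul_add, smul_comm (ω - ω ^ 2) a, smul_comm (ω - ω ^ 2) b,
      smul_inv_smul₀ hδ] using h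
  have e1 : Tfst ω x y + Tsnd ω x y = x := by simpa using solve 1 1 x (by module)
  have e2 : ω • Tfst ω x y + ω ^ 2 • Tsnd ω x y = y := solve _ _ y (by module)
  have e3 : ω ^ 2 • Tfst ω x y + ω • Tsnd ω x y = -x - y :=
    solve _ _ _ (by linear_combination (norm := module) (ω * (1 - ω)) • hω.sq_add_add_one • x)
  rw [Ttriple, e1, e2, e3]

lemma Ttriple_eq_iff (hω : IsPrimitiveRoot ω 3) {x y u v : W} (hxy : x ≠ y) :
    Ttriple ω u v = {x, y, -x - y} ↔ ∃ c : F, c ^ 3 = 1 ∧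
      ((u = c • Tfst ω x y ∧ v = c⁻¹ • Tsnd ω x y) ∨
        (u = c • Tsnd ω x y ∧ v = c⁻¹ • Tfst ω x y)) := by
  constructor
  · intro h
    have hx : x ∈ Ttriple ω u v := by simp [h]
    have hy : y ∈ Ttriple ω u v := by simp [h]
    obtain ⟨c, hc, rfl⟩ := (mem_Ttriple_iff hω).1 hx
    have hc0 : c ≠ 0 := by rintro rfl; norm_num at hc
    refine ⟨c⁻¹, by rw [inv_pow, hc, inv_one], ?_⟩
    -- after rotating `(u, v)` to `(c u, c⁻¹ v)`, `x` is the first entry, so `y` is the second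
    -- or the third, which determines the pair up to swapping
    rw [← Ttriple_smul_inv_smul hω hc, Ttriple] at hy
    simp only [Set.mem_insert_iff, Set.mem_singleton_iff] at hy
    rcases hy with rfl | rfl | rfl
    · exact absurd rfl hxy
    · obtain ⟨hu, hv⟩ := eq_Tfst_Tsnd (u := c • u) (v := c⁻¹ • v) hω rfl rfl
      left
      rw [← hu, ← hv, inv_inv, inv_smul_smul₀ hc0, smul_inv_smul₀ hc0]
      exact ⟨rfl, rfl⟩
    · obtain ⟨hv, hu⟩ := eq_Tfst_Tsnd hω (add_comm (c⁻¹ • v) (c • u)) (add_comm _ _)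
      right
      rw [← hu, ← hv, inv_inv, inv_smul_smul₀ hc0, smul_inv_smul₀ hc0]
      exact ⟨rfl, rfl⟩
  · rintro ⟨c, hc, ⟨rfl, rfl⟩ | ⟨rfl, rfl⟩⟩
    · rw [Ttriple_smul_inv_smul hω hc, Ttriple_Tfst_Tsnd hω]
    · rw [Ttriple_smul_inv_smul hω hc, Ttriple_comm, Ttriple_Tfst_Tsnd hω]

lemma Ttriple_or_neg_eq_iff (hω : IsPrimitiveRoot ω 3) {x y u v : W} (hxy : x ≠ y) :
    ({x, y, -x - y} = Ttriple ω u v ∨ {x, y, -x - y} = -Ttriple ω u v) ↔ ∃ c : F, c ^ 6 = 1 ∧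
      ((u = c • Tfst ω x y ∧ v = c⁻¹ • Tsnd ω x y) ∨
        (u = c • Tsnd ω x y ∧ v = c⁻¹ • Tfst ω x y)) := by
  have hneg : ∀ (c : F) (p : W), -u = c • p ↔ u = -c • p := fun c p => by
    rw [neg_eq_iff_eq_neg, neg_smul]
  have hneg' : ∀ (c : F) (p : W), -v = c⁻¹ • p ↔ v = (-c)⁻¹ • p := fun c p => by
    rw [neg_eq_iff_eq_neg, inv_neg, neg_smul]
  rw [neg_Ttriple, eq_comm, eq_comm (a := ({x, y, -x - y} : Set W)), Ttriple_eq_iff hω hxy,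
    Ttriple_eq_iff hω hxy]
  simp only [pow_six_eq_one_iff, or_and_right, exists_or, hneg, hneg']
  refine or_congr_right ⟨fun ⟨c, hc, h⟩ => ⟨-c, by rwa [neg_neg], h⟩,
    fun ⟨c, hc, h⟩ => ⟨-c, hc, by rwa [neg_neg]⟩⟩

lemma Tfst_mem {L : Submodule F W} {x y : W} (hx : x ∈ L) (hy : y ∈ L) : Tfst ω x y ∈ L :=
  L.smul_mem _ (L.sub_mem hy (L.smul_mem _ hx))

lemma Tsnd_mem {L : Submodule F W} {x y : W} (hx : x ∈ L) (hy : y ∈ L) : Tsnd ω x y ∈ L :=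
  L.smul_mem _ (L.sub_mem (L.smul_mem _ hx) hy)

lemma LinearIndependent.Tfst_Tsnd (hω : IsPrimitiveRoot ω 3) {x y : W}
    (hxy : LinearIndependent F ![x, y]) :
    LinearIndependent F ![Tfst ω x y, Tsnd ω x y] := by
  have hδ := hω.sub_sq_ne_zero
  rw [LinearIndependent.pair_iff] at hxy ⊢
  intro s t hst
  have h : (ω - ω ^ 2)⁻¹ • ((t * ω - s * ω ^ 2) • x + (s - t) • y) = 0 := by
    rw [← hst, Tfst, Tsnd]; module
  obtain ⟨h1, h2⟩ := hxy _ _ ((smul_eq_zero.1 h).resolve_left (inv_ne_zero hδ))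
  obtain rfl := sub_eq_zero.1 h2
  have : s * (ω - ω ^ 2) = 0 := by linear_combination h1
  exact ⟨(mul_eq_zero.1 this).resolve_right hδ, (mul_eq_zero.1 this).resolve_right hδ⟩

end Ttriple

section LinearAlgebra

variable {F W : Type*} [Field F] [AddCommGroup W] [Module F W]

lemma finrank_span_pair {x y : W} (hxy : LinearIndependent F ![x, y]) :
    Module.finrank F (Submodule.span F {x, y}) = 2 := by
  rw [← Matrix.range_cons_cons_empty x y ![], finrank_span_eq_card hxy, Fintype.card_fin]

lemma span_pair_eq_of_finrank_eq_two {x y : W} (hxy : LinearIndependent F ![x, y])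
    {L : Submodule F W} (hL : Module.finrank F L = 2) (hx : x ∈ L) (hy : y ∈ L) :
    Submodule.span F {x, y} = L := by
  have : FiniteDimensional F L := .of_finrank_pos (by omega)
  refine Submodule.eq_of_le_of_finrank_eq ?_ (by rw [finrank_span_pair hxy, hL])
  rw [Submodule.span_le]
  exact Set.insert_subset hx (Set.singleton_subset_iff.2 hy)

lemma span_singleton_eq_of_finrank_eq_one {K : Submodule F W} (hK : Module.finrank F K = 1)
    {w : W} (hwK : w ∈ K) (hw : w ≠ 0) : Submodule.span F {w} = K := by
  have : FiniteDimensional F K := .of_finrank_pos (by omega)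
  exact Submodule.eq_of_le_of_finrank_eq (Submodule.span_singleton_le_iff_mem _ _ |>.2 hwK)
    (by rw [finrank_span_singleton hw, hK])

lemma LinearMap.apply_smul_inv_smul (B : W →ₗ[F] W →ₗ[F] F) {c : F} (hc : c ≠ 0) (p q : W) :
    B (c • p) (c⁻¹ • q) = B p q := by
  simp [hc]

lemma LinearMap.IsAlt.apply_ne_zero {B : W →ₗ[F] W →ₗ[F] F} (hB : B.IsAlt)
    (hsep : B.SeparatingLeft) (hW : Module.finrank F W = 2) {p q : W}
    (hpq : LinearIndependent F ![p, q]) : B p q ≠ 0 := by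
  intro h
  have hspan := hpq.span_eq_top_of_card_eq_finrank (by rw [Fintype.card_fin, hW])
  rw [Matrix.range_cons_cons_empty] at hspan
  refine hpq.ne_zero 0 (hsep p fun z => ?_)
  obtain ⟨a, b, rfl⟩ := Submodule.mem_span_pair.1 (hspan ▸ Submodule.mem_top : z ∈ _)
  simp [hB.self_eq_zero, h]

end LinearAlgebra

lemma isPrimitiveRoot_of_forall_eq_pow {F : Type*} [Field F] [Fintype F]
    (hF : 2 < Fintype.card F) {g : F} (hg : ∀ x : F, x ≠ 0 → ∃ k : ℕ, g ^ k = x) :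
    IsPrimitiveRoot g (Fintype.card F - 1) := by
  classical
  have hg0 : g ≠ 0 := by
    rintro rfl
    have h1 : ∀ x : F, x ≠ 0 → x = 1 := fun x hx => by
      obtain ⟨_ | k, rfl⟩ := hg x hx
      · exact pow_zero _
      · exact absurd (zero_pow k.succ_ne_zero) hx
    have := Fintype.card_le_of_injective (fun x : F => decide (x = 0)) fun x y hxy => by
      by_cases hx : x = 0 <;> by_cases hy : y = 0 <;> simp_all
    simp only [Fintype.card_bool] at this
    omega
  have hgen : ∀ x : Fˣ, x ∈ Subgroup.zpowers (Units.mk0 g hg0) := fun x => by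
    obtain ⟨k, hk⟩ := hg x x.ne_zero
    exact ⟨k, Units.ext (by simpa using hk)⟩
  rw [IsPrimitiveRoot.iff_orderOf, ← Units.val_mk0 hg0, orderOf_units,
    orderOf_eq_card_of_forall_mem_zpowers hgen, Nat.card_eq_fintype_card, Fintype.card_units]

section Sector

variable {F : Type*} [Field F] {g : F} {t : ℕ}

local notation "ω" => g ^ (2 * t)

/-- The set `g^[0,t) · c` of the paper. -/
def sector (g : F) (t : ℕ) (c : F) : Set F := {z | ∃ m < t, z = g ^ m * c}

lemma exists_pow_mul_of_ne_zero (hg : IsPrimitiveRoot g (6 * t))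
    (hsurj : ∀ x : F, x ≠ 0 → ∃ k : ℕ, g ^ k = x) (ht : 0 < t) {d : F} (hd : d ≠ 0) :
    ∃ a < t, ∃ c : F, c ^ 6 = 1 ∧ d = g ^ a * c := by
  obtain ⟨k, rfl⟩ := hsurj d hd
  refine ⟨k % t, Nat.mod_lt _ ht, g ^ (t * (k / t)), ?_, by rw [← pow_add, Nat.mod_add_div]⟩
  rw [← pow_mul, show t * (k / t) * 6 = 6 * t * (k / t) by ring, pow_mul, hg.pow_eq_one, one_pow]

lemma eq_of_pow_mul_eq_pow_mul (hg : IsPrimitiveRoot g (6 * t)) {a a' : ℕ} {c c' : F}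
    (ha : a < t) (ha' : a' < t) (hc : c ^ 6 = 1) (hc' : c' ^ 6 = 1)
    (h : g ^ a * c = g ^ a' * c') : a = a' := by
  have h6 : g ^ (6 * a) = g ^ (6 * a') := by
    rw [mul_comm 6, mul_comm 6, pow_mul, pow_mul, ← mul_one ((g ^ a) ^ 6), ← hc,
      ← mul_one ((g ^ a') ^ 6), ← hc', ← mul_pow, ← mul_pow, h]
  have := hg.pow_inj (by omega) (by omega) h6
  omega

lemma IsPrimitiveRoot.pow_two_mul (hg : IsPrimitiveRoot g (6 * t)) (ht : 0 < t) :
    IsPrimitiveRoot ω 3 :=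
  hg.pow (by omega) (by ring)

lemma pow_two_mul_pow_pow_six (hg : IsPrimitiveRoot g (6 * t)) (b : ℕ) :
    (ω ^ b) ^ 6 = 1 := by
  rw [← pow_mul, ← pow_mul, show 2 * t * (b * 6) = 6 * t * (2 * b) by ring, pow_mul,
    hg.pow_eq_one, one_pow]

lemma eq_of_mem_sector_of_mem_sector (hg : IsPrimitiveRoot g (6 * t)) {z : F} {b b' : ℕ}
    (hb : b < 3) (hb' : b' < 3) (h : z ∈ sector g t (ω ^ b))
    (h' : z ∈ sector g t (ω ^ b')) : b = b' := by
  obtain ⟨m, hm, rfl⟩ := h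
  obtain ⟨m', hm', h'⟩ := h'
  obtain rfl := eq_of_pow_mul_eq_pow_mul hg hm hm' (pow_two_mul_pow_pow_six hg b)
    (pow_two_mul_pow_pow_six hg b') h'
  exact (hg.pow_two_mul (by omega)).pow_inj hb hb'
    (mul_left_cancel₀ (pow_ne_zero _ (hg.ne_zero (by omega))) h')

lemma neg_notMem_sector_of_mem (hg : IsPrimitiveRoot g (6 * t)) {z : F} {b b' : ℕ}
    (h : z ∈ sector g t (ω ^ b)) :
    -z ∉ sector g t (ω ^ b') := by
  rintro ⟨m', hm', h'⟩
  obtain ⟨m, hm, rfl⟩ := h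
  have ht : 0 < t := by omega
  rw [← mul_neg] at h'
  have hneg : (-ω ^ b) ^ 6 = 1 := by
    rw [Even.neg_pow (by decide), pow_two_mul_pow_pow_six hg]
  obtain rfl := eq_of_pow_mul_eq_pow_mul hg hm hm' hneg (pow_two_mul_pow_pow_six hg b') h'
  have hcube : ∀ i, (ω ^ i) ^ 3 = 1 := fun i => by
    rw [← pow_mul, mul_comm i 3, pow_mul, (hg.pow_two_mul ht).pow_eq_one, one_pow]
  have h3 : -(1 : F) = 1 := by
    have := congrArg (· ^ 3) (mul_left_cancel₀ (pow_ne_zero _ (hg.ne_zero (by omega))) h')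
    simpa only [Odd.neg_pow (by decide : Odd 3), hcube] using this
  have h2 : IsPrimitiveRoot (g ^ (3 * t)) 2 := hg.pow (by omega) (by ring)
  exact h2.ne_one one_lt_two (h2.eq_neg_one_of_two_right.trans h3)

lemma exists_mem_sector_or_neg_mem (hg : IsPrimitiveRoot g (6 * t))
    (hsurj : ∀ x : F, x ≠ 0 → ∃ k : ℕ, g ^ k = x) (ht : 0 < t) {z : F} (hz : z ≠ 0) :
    ∃ b < 3, z ∈ sector g t (ω ^ b) ∨ -z ∈ sector g t (ω ^ b) := by
  have hω := hg.pow_two_mul ht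
  obtain ⟨m, hm, c, hc, rfl⟩ := exists_pow_mul_of_ne_zero hg hsurj ht hz
  rcases pow_six_eq_one_iff.1 hc with hc3 | hc3
  · obtain ⟨b, hb, hcb⟩ := hω.eq_pow_of_pow_eq_one hc3
    exact ⟨b, hb, Or.inl ⟨m, hm, by rw [hcb]⟩⟩
  · obtain ⟨b, hb, hcb⟩ := hω.eq_pow_of_pow_eq_one hc3
    exact ⟨b, hb, Or.inr ⟨m, hm, by rw [hcb, mul_neg]⟩⟩

end Sector

section Classes

variable {F W : Type*} [Field F] [AddCommGroup W] [Module F W] {g : F} {t : ℕ}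
  {gen : Submodule F W → W}

local notation "ω" => g ^ (2 * t)

lemma existsUnique_pow_smul_gen (hg : IsPrimitiveRoot g (6 * t))
    (hsurj : ∀ x : F, x ≠ 0 → ∃ k : ℕ, g ^ k = x) (ht : 0 < t)
    (hgen : ∀ K : Submodule F W, Module.finrank F K = 1 → gen K ∈ K ∧ gen K ≠ 0)
    {w : W} (hw : w ≠ 0) :
    ∃! p : ℕ × Submodule F W, p.1 < t ∧ Module.finrank F p.2 = 1 ∧
      ∃ e : F, e ^ 6 = 1 ∧ g ^ p.1 • gen p.2 = e • w := by
  have hg0 : g ≠ 0 := hg.ne_zero (by omega)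
  have hline : ∀ {a : ℕ} {K : Submodule F W} {e : F}, Module.finrank F K = 1 → e ^ 6 = 1 →
      g ^ a • gen K = e • w → Submodule.span F {w} = K := by
    intro a K e hK he h
    have he0 : e ≠ 0 := by rintro rfl; norm_num at he
    refine span_singleton_eq_of_finrank_eq_one hK ?_ hw
    rw [← K.smul_mem_iff he0, ← h]
    exact K.smul_mem _ (hgen K hK).1
  set K := Submodule.span F {w}
  have hK : Module.finrank F K = 1 := finrank_span_singleton hw
  obtain ⟨d, hd⟩ := Submodule.mem_span_singleton.1 (hgen K hK).1
  have hd0 : d ≠ 0 := by rintro rfl; exact (hgen K hK).2 (by rw [← hd, zero_smul])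
  obtain ⟨a, ha, c, hc, hdc⟩ := exists_pow_mul_of_ne_zero hg hsurj ht (inv_ne_zero hd0)
  have hgad : g ^ a * d = c⁻¹ := by
    rw [inv_eq_iff_eq_inv.1 hdc, mul_inv, mul_inv_cancel_left₀ (pow_ne_zero _ hg0)]
  refine ⟨(a, K), ⟨ha, hK, c⁻¹, by rw [inv_pow, hc, inv_one], ?_⟩, ?_⟩
  · rw [← hd, smul_smul, hgad]
  · rintro ⟨a', K'⟩ ⟨ha', hK', e', he', h'⟩
    obtain rfl : K' = K := (hline hK' he' h').symm
    rw [← hd, smul_smul] at h'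
    have hgad' : g ^ a' * d = e' := smul_left_injective F hw h'
    have : a' = a := eq_of_pow_mul_eq_pow_mul hg ha' ha (by rw [inv_pow, hc, inv_one]) he'
      (by rw [← hgad, ← hgad']; ring)
    rw [this]

lemma mem_Pclass_iff (hω : IsPrimitiveRoot ω 3)
    {f : (L : Submodule F W) → L →ₗ[F] L →ₗ[F] F} {L : Submodule F W}
    (hL : Module.finrank F L = 2) (halt : (f L).IsAlt) {x y : W}
    (hxy : LinearIndependent F ![x, y]) (hxL : x ∈ L) (hyL : y ∈ L) {u : W} {c : F} :
    {x, y, -x - y} ∈ Pclass t g f u c ↔ ∃ e : F, e ^ 6 = 1 ∧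
      ((u = e • Tfst ω x y ∧
          f L ⟨Tfst ω x y, Tfst_mem hxL hyL⟩ ⟨Tsnd ω x y, Tsnd_mem hxL hyL⟩ ∈ sector g t c) ∨
        (u = e • Tsnd ω x y ∧
          -f L ⟨Tfst ω x y, Tfst_mem hxL hyL⟩ ⟨Tsnd ω x y, Tsnd_mem hxL hyL⟩ ∈ sector g t c)) := by
  have hxy' : x ≠ y := hxy.injective.ne (show (0 : Fin 2) ≠ 1 by decide)
  set u₀ : L := ⟨Tfst ω x y, Tfst_mem hxL hyL⟩
  set v₀ : L := ⟨Tsnd ω x y, Tsnd_mem hxL hyL⟩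
  constructor
  · rintro ⟨L', huL', hL', ⟨v, hvL'⟩, hfv, hS⟩
    have hsub : ({x, y, -x - y} : Set W) ⊆ L' := by
      rcases hS with hS | hS <;> rw [hS]
      · exact Ttriple_subset huL' hvL'
      · rw [neg_Ttriple]
        exact Ttriple_subset (neg_mem huL') (neg_mem hvL')
    obtain rfl : L = L' := (span_pair_eq_of_finrank_eq_two hxy hL hxL hyL).symm.trans
      (span_pair_eq_of_finrank_eq_two hxy hL' (hsub (by simp)) (hsub (by simp)))
    obtain ⟨e, he, h⟩ := (Ttriple_or_neg_eq_iff hω hxy').1 hS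
    have he0 : e ≠ 0 := by rintro rfl; norm_num at he
    refine ⟨e, he, ?_⟩
    obtain ⟨m, hm, hfm⟩ := hfv
    rcases h with ⟨rfl, rfl⟩ | ⟨rfl, rfl⟩
    · exact Or.inl ⟨rfl, m, hm, ((f L).apply_smul_inv_smul he0 u₀ v₀).symm.trans hfm⟩
    · refine Or.inr ⟨rfl, m, hm, ?_⟩
      rw [halt.neg, ← (f L).apply_smul_inv_smul he0 v₀ u₀]
      exact hfm
  · rintro ⟨e, he, ⟨rfl, m, hm, hfm⟩ | ⟨rfl, m, hm, hfm⟩⟩ <;>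
      have he0 : e ≠ 0 := by rintro rfl; norm_num at he
    · refine ⟨L, L.smul_mem e u₀.2, hL, e⁻¹ • v₀, ⟨m, hm, ?_⟩,
        (Ttriple_or_neg_eq_iff hω hxy').2 ⟨e, he, Or.inl ⟨rfl, rfl⟩⟩⟩
      exact ((f L).apply_smul_inv_smul he0 u₀ v₀).trans hfm
    · refine ⟨L, L.smul_mem e v₀.2, hL, e⁻¹ • u₀, ⟨m, hm, ?_⟩,
        (Ttriple_or_neg_eq_iff hω hxy').2 ⟨e, he, Or.inr ⟨rfl, rfl⟩⟩⟩
      rw [halt.neg] at hfm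
      exact ((f L).apply_smul_inv_smul he0 v₀ u₀).trans hfm

lemma existsUnique_index_of_mem_sector (hg : IsPrimitiveRoot g (6 * t))
    (hsurj : ∀ x : F, x ≠ 0 → ∃ k : ℕ, g ^ k = x) (ht : 0 < t)
    (hgen : ∀ K : Submodule F W, Module.finrank F K = 1 → gen K ∈ K ∧ gen K ≠ 0)
    {u₀ v₀ : W} (hu₀ : u₀ ≠ 0) {z : F} {b : ℕ} (hb : b < 3) (hz : z ∈ sector g t (ω ^ b)) :
    ∃! p : ℕ × ℕ × Submodule F W, p.1 < t ∧ p.2.1 < 3 ∧ Module.finrank F p.2.2 = 1 ∧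
      ∃ e : F, e ^ 6 = 1 ∧ ((g ^ p.1 • gen p.2.2 = e • u₀ ∧ z ∈ sector g t (ω ^ p.2.1)) ∨
        (g ^ p.1 • gen p.2.2 = e • v₀ ∧ -z ∈ sector g t (ω ^ p.2.1))) := by
  obtain ⟨⟨a, K⟩, ⟨ha, hK, e, he, hu⟩, huniq⟩ := existsUnique_pow_smul_gen hg hsurj ht hgen hu₀
  refine ⟨(a, b, K), ⟨ha, hb, hK, e, he, Or.inl ⟨hu, hz⟩⟩, ?_⟩
  rintro ⟨a', b', K'⟩ ⟨ha', hb', hK', e', he', ⟨hu', hz'⟩ | ⟨-, hz'⟩⟩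
  · obtain ⟨rfl, rfl⟩ := Prod.mk.inj (huniq (a', K') ⟨ha', hK', e', he', hu'⟩)
    obtain rfl := eq_of_mem_sector_of_mem_sector hg hb' hb hz' hz
    rfl
  · exact absurd hz' (neg_notMem_sector_of_mem hg hz)

lemma existsUnique_index (hg : IsPrimitiveRoot g (6 * t))
    (hsurj : ∀ x : F, x ≠ 0 → ∃ k : ℕ, g ^ k = x) (ht : 0 < t)
    (hgen : ∀ K : Submodule F W, Module.finrank F K = 1 → gen K ∈ K ∧ gen K ≠ 0)
    {u₀ v₀ : W} (hu₀ : u₀ ≠ 0) (hv₀ : v₀ ≠ 0) {z : F} (hz : z ≠ 0) :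
    ∃! p : ℕ × ℕ × Submodule F W, p.1 < t ∧ p.2.1 < 3 ∧ Module.finrank F p.2.2 = 1 ∧
      ∃ e : F, e ^ 6 = 1 ∧ ((g ^ p.1 • gen p.2.2 = e • u₀ ∧ z ∈ sector g t (ω ^ p.2.1)) ∨
        (g ^ p.1 • gen p.2.2 = e • v₀ ∧ -z ∈ sector g t (ω ^ p.2.1))) := by
  obtain ⟨b, hb, hz | hz⟩ := exists_mem_sector_or_neg_mem hg hsurj ht hz
  · exact existsUnique_index_of_mem_sector hg hsurj ht hgen hu₀ hb hz
  · simpa only [neg_neg, or_comm] using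
      existsUnique_index_of_mem_sector (v₀ := u₀) hg hsurj ht hgen hv₀ hb hz

end Classes

theorem Pclasses_cover_exactly_once_general (F : Type*) [Field F] [Fintype F]
    (t : ℕ) (hq : Fintype.card F = 6 * t + 1)
    (g : F) (hg : ∀ x : F, x ≠ 0 → ∃ k : ℕ, g ^ k = x)
    (n : ℕ)
    (f : (L : Submodule F (Fin n → F)) → L →ₗ[F] L →ₗ[F] F)
    (halt : ∀ L : Submodule F (Fin n → F), Module.finrank F L = 2 →
      ∀ x, f L x x = 0)
    (hnd : ∀ L : Submodule F (Fin n → F), Module.finrank F L = 2 →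
      ∀ x, (∀ y, f L x y = 0) → x = 0)
    (gen : Submodule F (Fin n → F) → (Fin n → F))
    (hgen : ∀ K : Submodule F (Fin n → F), Module.finrank F K = 1 →
      gen K ∈ K ∧ gen K ≠ 0) :
    ∀ S : Set (Fin n → F),
      (∃ x y : Fin n → F, LinearIndependent F ![x, y] ∧ S = {x, y, -x - y}) →
      ∃! p : ℕ × ℕ × Submodule F (Fin n → F),
        p.1 < t ∧ p.2.1 < 3 ∧ Module.finrank F p.2.2 = 1 ∧
        S ∈ Pclass t g f (g ^ p.1 • gen p.2.2) ((g ^ (2 * t)) ^ p.2.1) := by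
  rintro S ⟨x, y, hxy, rfl⟩
  have ht : 0 < t := by have := Fintype.one_lt_card (α := F); omega
  have hg' : IsPrimitiveRoot g (6 * t) := by
    simpa [hq] using isPrimitiveRoot_of_forall_eq_pow (by omega) hg
  have hω := hg'.pow_two_mul ht
  set L := Submodule.span F {x, y}
  have hxL : x ∈ L := Submodule.subset_span (by simp)
  have hyL : y ∈ L := Submodule.subset_span (by simp)
  have hL := finrank_span_pair hxy
  have hind := hxy.Tfst_Tsnd hω
  simp only [mem_Pclass_iff hω hL (halt L hL) hxy hxL hyL]
  refine existsUnique_index hg' hg ht hgen (hind.ne_zero 0) (hind.ne_zero 1)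
    (LinearMap.IsAlt.apply_ne_zero (halt L hL) (hnd L hL) hL ?_)
  rw [LinearIndependent.pair_iff] at hind ⊢
  exact fun s r h => hind s r (by simpa using congrArg Subtype.val h)

/-- Lemma 3.4: the partial parallel classes `P_{gᵃ·uᵢ, ωᵇ}` for `0 ≤ a < t`,
`b ∈ {0,1,2}` and `uᵢ` ranging over chosen generators of the 1-dimensional
subspaces contain every zero-sum non-collinear triple exactly once. -/
theorem Pclasses_cover_exactly_once (F : Type*) [Field F] [Fintype F]
    (t : ℕ) (hq : Fintype.card F = 6 * t + 1)
    (g : F) (hg : ∀ x : F, x ≠ 0 → ∃ k : ℕ, g ^ k = x)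
    (n : ℕ) (hn : 2 ≤ n)
    (f : (L : Submodule F (Fin n → F)) → L →ₗ[F] L →ₗ[F] F)
    (halt : ∀ L : Submodule F (Fin n → F), Module.finrank F L = 2 →
      ∀ x, f L x x = 0)
    (hnd : ∀ L : Submodule F (Fin n → F), Module.finrank F L = 2 →
      ∀ x, (∀ y, f L x y = 0) → x = 0)
    (gen : Submodule F (Fin n → F) → (Fin n → F))
    (hgen : ∀ K : Submodule F (Fin n → F), Module.finrank F K = 1 →
      gen K ∈ K ∧ gen K ≠ 0) :
    ∀ S : Set (Fin n → F),
      (∃ x y : Fin n → F, LinearIndependent F ![x, y] ∧ S = {x, y, -x - y}) →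
      ∃! p : ℕ × ℕ × Submodule F (Fin n → F),
        p.1 < t ∧ p.2.1 < 3 ∧ Module.finrank F p.2.2 = 1 ∧
        S ∈ Pclass t g f (g ^ p.1 • gen p.2.2) ((g ^ (2 * t)) ^ p.2.1) :=
  Pclasses_cover_exactly_once_general F t hq g hg n f halt hnd gen hgen
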